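/- arXiv:1306.3123 — 2 statements merged into one kernel-verified Lean document; each statement's English description precedes it below -/
import Mathlib

section
/- For each k ≥ 1, the word α_k is the lexicographically minimal factor of u of length |α_k|, every return word to α_k^{e_k} in u is a Lyndon word, and α_k is unbordered. -/
open scoped BigOperators ENNReal

namespace PeriodicityComplexity

variable {A : Type*}

/-- The finite word `z` occurs in the infinite word `w` at the (0-based) index `j`,
i.e. `z` occupies positions `j+1, …, j+|z|` of `w`. -/
def OccursAt (w : ℕ → A) (z : List A) (j : ℕ) : Prop :=
  z = List.ofFn (fun t : Fin z.length => w (j + t))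

/-- `z` is a (finite) factor of the infinite word `w`. -/
def IsFactor (w : ℕ → A) (z : List A) : Prop := ∃ j, OccursAt w z j

/-- An infinite word is uniformly recurrent if every factor occurs with bounded gaps. -/
def UniformlyRecurrent (w : ℕ → A) : Prop :=
  ∀ z : List A, IsFactor w z → ∃ N : ℕ, ∀ j : ℕ, ∃ t, j ≤ t ∧ t < j + N ∧ OccursAt w z t

/-- An infinite word is periodic if some `p ≥ 1` is a period of all of it. -/
def Periodic (w : ℕ → A) : Prop := ∃ p : ℕ, 1 ≤ p ∧ ∀ i, w (i + p) = w i

/-- An infinite word is ultimately periodic if some `p ≥ 1` is a period from some point on. -/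
def UltimatelyPeriodic (w : ℕ → A) : Prop :=
  ∃ p : ℕ, 1 ≤ p ∧ ∃ N : ℕ, ∀ i, N ≤ i → w (i + p) = w i

/-- The `e`-fold concatenation `v^e` of a finite word `v`. -/
def wpow (v : List A) (e : ℕ) : List A := (List.replicate e v).flatten

/-- The prefix of length `i` of an infinite word. -/
def wordPrefix (w : ℕ → A) (i : ℕ) : List A := List.ofFn (fun t : Fin i => w t)

/-- `r` is a repetition word at position `i` of the infinite word `w` (`w = uv`, `|u| = i`):
`r` is nonempty, suffix-comparable with `u`, and a prefix of the infinite remainder `v`. -/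
def IsRepWordAt (w : ℕ → A) (i : ℕ) (r : List A) : Prop :=
  r ≠ [] ∧ (r <:+ wordPrefix w i ∨ wordPrefix w i <:+ r) ∧ OccursAt w r i

/-- Local period of an infinite word at position `i`, as an extended nonnegative real
(`⊤` if there is no repetition word at that position). -/
noncomputable def localPeriod (w : ℕ → A) (i : ℕ) : ℝ≥0∞ :=
  sInf ((fun r : List A => (r.length : ℝ≥0∞)) '' {r | IsRepWordAt w i r})

/-- Periodicity complexity `h_w(i) = (1/i) ∑_{j=1}^{i} p_w(j)` of an infinite word. -/
noncomputable def pcomplexity (w : ℕ → A) (i : ℕ) : ℝ≥0∞ :=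
  (∑ j ∈ Finset.Icc 1 i, localPeriod w j) / (i : ℝ≥0∞)

/-- `r` is a repetition word at position `i` of the finite word `v` (`v = xy`, `|x| = i`):
`r` is nonempty, suffix-comparable with `x` and prefix-comparable with `y`. -/
def IsRepWordAtF (v : List A) (i : ℕ) (r : List A) : Prop :=
  r ≠ [] ∧ (r <:+ v.take i ∨ v.take i <:+ r) ∧ (r <+: v.drop i ∨ v.drop i <+: r)

/-- Local period of a finite word at position `i`. -/
noncomputable def localPeriodF (v : List A) (i : ℕ) : ℕ :=
  sInf {n : ℕ | ∃ r : List A, IsRepWordAtF v i r ∧ r.length = n}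

/-- Average local period `h(v) = (1/|v|) ∑_{i=1}^{|v|} p_v(i)` of a finite word. -/
noncomputable def hF (v : List A) : ℝ :=
  (∑ i ∈ Finset.Icc 1 v.length, (localPeriodF v i : ℝ)) / (v.length : ℝ)

/-- An infinite word is of bounded repetition if the exponents of powers of nonempty
words occurring in it are bounded. -/
def BoundedRepetition (w : ℕ → A) : Prop :=
  ∃ E : ℕ, ∀ (v : List A) (e : ℕ), v ≠ [] → IsFactor w (wpow v e) → e ≤ E

/-- `p` is a period of the finite word `z`. -/
def HasPeriodF (z : List A) (p : ℕ) : Prop :=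
  ∀ t : ℕ, t + p < z.length → z[t]? = z[t + p]?

/-- The (least) period of a finite word. -/
noncomputable def periodF (z : List A) : ℕ := sInf {p : ℕ | 1 ≤ p ∧ HasPeriodF z p}

/-- `r` is a return word to `z` in the infinite word `w`: `r` is the factor of `w` between
two consecutive occurrences of `z`. -/
def IsReturnWord (w : ℕ → A) (z r : List A) : Prop :=
  r ≠ [] ∧ ∃ j : ℕ, OccursAt w z j ∧ OccursAt w z (j + r.length) ∧
    (∀ t, j < t → t < j + r.length → ¬ OccursAt w z t) ∧ OccursAt w r j

/-- `l` is the length of some return word to `z` in `w`. -/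
def IsReturnLength (w : ℕ → A) (z : List A) (l : ℕ) : Prop :=
  ∃ r : List A, IsReturnWord w z r ∧ r.length = l

/-- The maximal return time of `z` in `w`. -/
noncomputable def maxReturnTime (w : ℕ → A) (z : List A) : ℕ :=
  sSup {l : ℕ | IsReturnLength w z l}

/-- A finite word is unbordered if no proper nonempty prefix of it is also a suffix. -/
def Unbordered (z : List A) : Prop :=
  ∀ b : List A, b ≠ [] → b.length < z.length → b <+: z → ¬ b <:+ z

/-- A finite word is primitive if it is not a (trivial or nontrivial) power of a word
other than itself. -/
def Primitive (z : List A) : Prop :=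
  ∀ (v : List A) (k : ℕ), z = wpow v k → k = 1

/-- A finite word is Lyndon if it is primitive and lexicographically minimal among its
conjugates: `z ≤ yx` for every factorization `z = xy`. -/
def IsLyndon [LinearOrder A] (z : List A) : Prop :=
  Primitive z ∧ ∀ x y : List A, z = x ++ y → z ≤ y ++ x

end PeriodicityComplexity

open PeriodicityComplexity

/-!
Induction on `k`, with the invariant that `α k` is unbordered and lexicographically least among
the factors of `u` of its length. Given this for `v = α k`, every prefix of a power of `v` is least
among the factors of its length (compare block by block). Two occurrences of `z = v^e` are at
distance at least `|z|`: a shorter shift either overlaps two copies of `v`, giving `v` a border, or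
is a multiple of `|v|` and produces `v^(e+1)`. Hence every return word `r` to `z` begins with `z`.
If `r` had a border, or were greater than one of its proper suffixes, we would find a factor of
length `|z|` that is `≤ z` and starts strictly inside `r`; by minimality it is `z` itself, which
contradicts that `r` is a return word. Finally a least return word `r₀` is least among the factors
of its length: a smaller factor starts with `z`, hence with a return word, which would be
smaller than `r₀`.
-/

namespace List

variable {A : Type*} [LinearOrder A]

-- Core's `List.IsPrefix.le` is about core's `≤` on lists, which Mathlib's order overrides.
theorem IsPrefix.lex_le {a b : List A} (h : a <+: b) : a ≤ b := not_lt.mp (IsPrefix.le h)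

theorem append_lt_append_of_length_eq {a b : List A} (hlen : a.length = b.length) (h : a < b)
    (s t : List A) : a ++ s < b ++ t := by
  induction a generalizing b with
  | nil => cases b <;> simp_all
  | cons x a ih =>
    cases b with
    | nil => simp at hlen
    | cons y b =>
      rw [cons_lt_cons_iff] at h
      rw [cons_append, cons_append, cons_lt_cons_iff]
      exact h.imp_right fun ⟨hxy, hab⟩ => ⟨hxy, ih (by simpa using hlen) hab⟩

theorem append_le_append_of_length_eq {a b c d : List A} (hlen : a.length = b.length)
    (hab : a ≤ b) (hcd : c ≤ d) : a ++ c ≤ b ++ d := by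
  rcases hab.lt_or_eq with h | rfl
  · exact (append_lt_append_of_length_eq hlen h c d).le
  · exact not_lt.mp (append_left_le (not_lt.mpr hcd))

theorem take_le_take_of_le {a b : List A} (h : a ≤ b) (k : ℕ) : a.take k ≤ b.take k := by
  induction a generalizing b k with
  | nil => rw [take_nil]; exact nil_prefix.lex_le
  | cons x a ih =>
    cases b with
    | nil => exact absurd h (not_le.mpr Lex.nil)
    | cons y b =>
      cases k with
      | zero => simp
      | succ k =>
        rw [take_succ_cons, take_succ_cons]
        rcases h.lt_or_eq with hlt | heq
        · rcases cons_lt_cons_iff.mp hlt with hxy | ⟨rfl, hab⟩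
          · exact (cons_lt_cons_iff.mpr (.inl hxy)).le
          · exact cons_le_cons x (ih hab.le k)
        · obtain ⟨rfl, rfl⟩ := cons.inj heq
          exact le_rfl

end List

namespace PeriodicityComplexity

section Occurrences

variable {A : Type*} {u : ℕ → A} {x y z : List A} {j : ℕ}

def seg (u : ℕ → A) (j L : ℕ) : List A := List.ofFn fun i : Fin L => u (j + i)

@[simp] theorem length_seg (u : ℕ → A) (j L : ℕ) : (seg u j L).length = L := List.length_ofFn

theorem occursAt_iff_eq_seg : OccursAt u z j ↔ z = seg u j z.length := Iff.rfl

theorem occursAt_seg (u : ℕ → A) (j L : ℕ) : OccursAt u (seg u j L) j := by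
  rw [occursAt_iff_eq_seg, length_seg]

theorem seg_add (u : ℕ → A) (j L M : ℕ) : seg u j (L + M) = seg u j L ++ seg u (j + L) M := by
  simp only [seg, List.ofFn_add, Fin.val_castLE, Fin.val_natAdd, add_assoc]

theorem occursAt_append :
    OccursAt u (x ++ y) j ↔ OccursAt u x j ∧ OccursAt u y (j + x.length) := by
  rw [occursAt_iff_eq_seg, List.length_append, seg_add]
  exact ⟨fun h => List.append_inj h (length_seg ..).symm,
    fun ⟨hx, hy⟩ => congrArg₂ _ hx hy⟩

theorem OccursAt.of_prefix (h : OccursAt u y j) (hxy : x <+: y) : OccursAt u x j := by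
  obtain ⟨t, rfl⟩ := hxy
  exact (occursAt_append.mp h).1

theorem OccursAt.eq_of_length_eq (hx : OccursAt u x j) (hy : OccursAt u y j)
    (h : x.length = y.length) : x = y := by
  rw [occursAt_iff_eq_seg.mp hx, occursAt_iff_eq_seg.mp hy, h]

theorem OccursAt.prefix_of_length_le (hx : OccursAt u x j) (hy : OccursAt u y j)
    (h : x.length ≤ y.length) : x <+: y := by
  rw [hx.eq_of_length_eq (hy.of_prefix (y.take_prefix x.length)) (by simp [h])]
  exact y.take_prefix _

theorem exists_isReturnWord_occursAt (hur : UniformlyRecurrent u) (hz : OccursAt u z j) :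
    ∃ r, IsReturnWord u z r ∧ OccursAt u r j := by
  classical
  obtain ⟨N, hN⟩ := hur z ⟨j, hz⟩
  have hnext : ∃ d, OccursAt u z (j + 1 + d) := by
    obtain ⟨t, ht, -, hocc⟩ := hN (j + 1)
    exact ⟨t - (j + 1), by rwa [Nat.add_sub_cancel' ht]⟩
  refine ⟨seg u j (Nat.find hnext + 1), ⟨List.ne_nil_of_length_pos (by simp), j, hz, ?_, ?_,
    occursAt_seg ..⟩, occursAt_seg ..⟩
  · simpa only [length_seg, add_assoc, add_comm 1] using Nat.find_spec hnext
  · intro t hjt ht hocc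
    rw [length_seg] at ht
    exact Nat.find_min hnext (m := t - (j + 1)) (by omega)
      (by rwa [Nat.add_sub_cancel' (by omega : j + 1 ≤ t)])

end Occurrences

section Powers

variable {A : Type*} {v : List A}

theorem wpow_add (v : List A) (a b : ℕ) : wpow v (a + b) = wpow v a ++ wpow v b := by
  simp only [wpow, List.replicate_add, List.flatten_append]

theorem wpow_one (v : List A) : wpow v 1 = v := by simp [wpow]

@[simp] theorem length_wpow (v : List A) (e : ℕ) : (wpow v e).length = e * v.length := by
  simp [wpow, List.sum_replicate]

theorem wpow_prefix_wpow (v : List A) {a b : ℕ} (h : a ≤ b) : wpow v a <+: wpow v b := by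
  obtain ⟨c, rfl⟩ := Nat.exists_eq_add_of_le h
  rw [wpow_add]
  exact List.prefix_append _ _

theorem Unbordered.primitive {r : List A} (hr : Unbordered r) (hne : r ≠ []) : Primitive r := by
  intro w k hk
  obtain _ | _ | k := k
  · exact absurd hk hne
  · rfl
  · have hw : 0 < w.length := List.length_pos_iff.mpr fun hw => hne (by simp [hk, hw, wpow])
    refine (hr (wpow w (k + 1)) (List.ne_nil_of_length_pos (by simp [hw])) (by simp [hk, hw])
      ?_ ?_).elim
    · rw [hk, wpow_add w (k + 1) 1]; exact List.prefix_append _ _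
    · rw [hk, add_comm (k + 1), wpow_add w 1 (k + 1)]; exact List.suffix_append _ _

variable {u : ℕ → A} {p s : ℕ}

theorem OccursAt.of_wpow {e i j : ℕ} (h : OccursAt u (wpow v e) j) (hi : i < e) :
    OccursAt u v (j + i * v.length) := by
  obtain ⟨c, rfl⟩ : ∃ c, e = i + (1 + c) := ⟨e - i - 1, by omega⟩
  rw [wpow_add, wpow_add, wpow_one, occursAt_append, length_wpow] at h
  exact h.2.of_prefix (List.prefix_append _ _)

theorem Unbordered.not_occursAt_add (hv : Unbordered v) (h1 : OccursAt u v p) (hs0 : 0 < s)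
    (hsv : s < v.length) : ¬ OccursAt u v (p + s) := by
  intro h2
  have hdrop : OccursAt u (v.drop s) (p + s) := by
    have := (occursAt_append.mp ((v.take_append_drop s).symm ▸ h1)).2
    rwa [List.length_take_of_le hsv.le] at this
  have hborder := hdrop.eq_of_length_eq (h2.of_prefix (v.take_prefix (v.length - s))) (by simp)
  exact hv (v.drop s) (by simp; omega) (by simp; omega) (hborder ▸ v.take_prefix _)
    (v.drop_suffix s)

theorem length_wpow_le_of_occursAt (hv : Unbordered v) {e j d : ℕ}
    (hmax : ¬ IsFactor u (wpow v (e + 1))) (h1 : OccursAt u (wpow v e) j)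
    (h2 : OccursAt u (wpow v e) (j + d)) (hd : 0 < d) : (wpow v e).length ≤ d := by
  by_contra! hde
  rw [length_wpow] at hde
  have hn : 0 < v.length := Nat.pos_of_ne_zero fun h => by simp [h] at hde
  obtain ⟨q, s, hs, rfl⟩ : ∃ q s, s < v.length ∧ d = q * v.length + s :=
    ⟨d / v.length, d % v.length, Nat.mod_lt _ hn, (Nat.div_add_mod' d _).symm⟩
  have hqe : q < e := Nat.lt_of_mul_lt_mul_right (a := v.length) (by omega)
  rcases Nat.eq_zero_or_pos s with rfl | hs0
  · have hq : 0 < q := Nat.pos_of_ne_zero fun h => by simp [h] at hd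
    have hpow : OccursAt u (wpow v (q + e)) j := by
      rw [wpow_add, occursAt_append, length_wpow]
      exact ⟨h1.of_prefix (wpow_prefix_wpow v hqe.le), by simpa using h2⟩
    rw [show q + e = e + 1 + (q - 1) by omega, wpow_add] at hpow
    exact hmax ⟨j, hpow.of_prefix (List.prefix_append _ _)⟩
  · exact hv.not_occursAt_add (h1.of_wpow hqe) hs0 hs
      (by simpa [add_assoc] using h2.of_wpow (i := 0) (by omega))

theorem IsReturnWord.wpow_prefix {e : ℕ} {r : List A} (hr : IsReturnWord u (wpow v e) r)
    (hv : Unbordered v) (hmax : ¬ IsFactor u (wpow v (e + 1))) : wpow v e <+: r := by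
  obtain ⟨hne, j, h1, h2, -, hrj⟩ := hr
  exact h1.prefix_of_length_le hrj
    (length_wpow_le_of_occursAt hv hmax h1 h2 (List.length_pos_iff.mpr hne))

end Powers

section LexMin

variable {A : Type*} [LinearOrder A] {u : ℕ → A} {v z P : List A}

def LexMin (u : ℕ → A) (v : List A) : Prop :=
  ∀ g : List A, IsFactor u g → g.length = v.length → v ≤ g

theorem lexMin_singleton {a : A} (ha : ∀ b, a ≤ b) : LexMin u [a] := by
  rintro g - hg
  obtain ⟨b, rfl⟩ := List.length_eq_one_iff.mp hg
  rcases (ha b).lt_or_eq with h | rfl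
  · exact (show [a] < [b] from List.Lex.rel h).le
  · exact le_rfl

theorem LexMin.eq_of_le (hz : LexMin u z) {g : List A} {p : ℕ} (hg : OccursAt u g p)
    (hlen : g.length = z.length) (hle : g ≤ z) : g = z :=
  le_antisymm hle (hz g ⟨p, hg⟩ hlen)

theorem LexMin.of_prefix_wpow (hv : LexMin u v) {k : ℕ} (hP : P <+: wpow v k) : LexMin u P := by
  rintro w ⟨j, hw⟩ hlen
  induction k generalizing P w j with
  | zero =>
    obtain rfl : P = [] := List.prefix_nil.mp hP
    exact List.nil_prefix.lex_le
  | succ k ih =>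
    rw [add_comm, wpow_add, wpow_one] at hP
    rcases le_total P.length v.length with hPv | hvP
    · have hvw := hv _ ⟨j, occursAt_seg u j _⟩ (length_seg ..)
      rw [List.prefix_iff_eq_take.mp (List.prefix_of_prefix_length_le hP (v.prefix_append _) hPv),
        List.prefix_iff_eq_take.mp (hw.prefix_of_length_le (occursAt_seg u j v.length)
          (by simpa [hlen] using hPv)), hlen]
      exact List.take_le_take_of_le hvw _
    · obtain ⟨P', rfl⟩ := List.prefix_of_prefix_length_le (v.prefix_append _) hP hvP
      rw [← w.take_append_drop v.length, occursAt_append] at hw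
      rw [← w.take_append_drop v.length]
      have hwv : (w.take v.length).length = v.length := by simp [hlen]
      refine List.append_le_append_of_length_eq hwv.symm (hv _ ⟨j, hw.1⟩ hwv)
        (ih (List.prefix_append_right_inj v |>.mp hP) _ _ hw.2 (by simp [hlen]))

end LexMin

section ReturnWords

variable {A : Type*} [LinearOrder A] {u : ℕ → A} {z r : List A}

theorem IsReturnWord.unbordered (hr : IsReturnWord u z r) (hz : ∀ P, P <+: z → LexMin u P)
    (hzr : z <+: r) : Unbordered r := by
  obtain ⟨-, j, hzj, hz', hgap, hrj⟩ := hr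
  intro b hb0 hbr hpre ⟨c, hcb⟩
  subst hcb
  rw [occursAt_append] at hrj
  have hc : 0 < c.length := by simp at hbr; omega
  have hb : 0 < b.length := List.length_pos_iff.mpr hb0
  apply hgap (j + c.length) (by omega) (by simp; omega)
  rcases le_total z.length b.length with hzb | hbz
  · exact hrj.2.of_prefix (List.prefix_of_prefix_length_le hzr hpre hzb)
  · -- `b` followed by the next occurrence of `z` is a factor of length `|z|` that is `≤ z`
    obtain ⟨t, rfl⟩ := List.prefix_of_prefix_length_le hpre hzr hbz
    have hg : OccursAt u (b ++ (b ++ t).take t.length) (j + c.length) :=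
      occursAt_append.mpr
        ⟨hrj.2, by simpa [add_assoc] using hz'.of_prefix (List.take_prefix _ _)⟩
    have hle : b ++ (b ++ t).take t.length ≤ b ++ t :=
      List.append_le_append_of_length_eq rfl le_rfl
        (hz _ (List.take_prefix _ _) t ⟨j + b.length, (occursAt_append.mp hzj).2⟩ (by simp))
    rw [← (hz _ List.prefix_rfl).eq_of_le hg (by simp) hle]
    exact hg

theorem IsReturnWord.le_append_of_eq_append (hr : IsReturnWord u z r) (hz : LexMin u z)
    (hzr : z <+: r) (hrb : Unbordered r) {x y : List A} (hxy : r = x ++ y) : r ≤ y ++ x := by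
  obtain ⟨-, j, -, hz', hgap, hrj⟩ := hr
  rcases eq_or_ne x [] with rfl | hx
  · simp [hxy]
  rcases eq_or_ne y [] with rfl | hy
  · simp [hxy]
  have hrxy : r.length = x.length + y.length := by simp [hxy]
  have hx0 : 0 < x.length := List.length_pos_iff.mpr hx
  have hy0 : 0 < y.length := List.length_pos_iff.mpr hy
  have hyr : y.length < r.length := by omega
  have hne : r.take y.length ≠ y := fun h =>
    hrb y hy hyr (h ▸ r.take_prefix _) (hxy ▸ List.suffix_append _ _)
  rcases lt_or_gt_of_ne hne with hlt | hgt
  · rw [← r.take_append_drop y.length]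
    exact (List.append_lt_append_of_length_eq (by simp; omega) hlt _ _).le
  · -- otherwise the factor of length `|z|` at the start of `y` is `≤ z`
    exfalso
    have hyz : OccursAt u (y ++ z) (j + x.length) := by
      rw [hxy, occursAt_append] at hrj
      exact occursAt_append.mpr ⟨hrj.2, by simpa [hxy, add_assoc] using hz'⟩
    have hlt : y ++ z < r ++ z := by
      rw [← r.take_append_drop y.length, List.append_assoc]
      exact List.append_lt_append_of_length_eq (by simp; omega) hgt _ _
    have hle := List.take_le_take_of_le hlt.le z.length
    rw [List.take_append_of_le_length hzr.length_le, ← List.prefix_iff_eq_take.mp hzr] at hle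
    have hg := hyz.of_prefix ((y ++ z).take_prefix z.length)
    rw [hz.eq_of_le hg (by simp) hle] at hg
    exact hgap _ (by omega) (by omega) hg

theorem IsReturnWord.isLyndon (hr : IsReturnWord u z r) (hz : ∀ P, P <+: z → LexMin u P)
    (hzr : z <+: r) : IsLyndon r :=
  ⟨(hr.unbordered hz hzr).primitive hr.1, fun _ _ =>
    hr.le_append_of_eq_append (hz z List.prefix_rfl) hzr (hr.unbordered hz hzr)⟩

theorem IsReturnWord.lexMin_of_forall_le (hur : UniformlyRecurrent u) (hz : LexMin u z)
    (hzr : ∀ r, IsReturnWord u z r → z <+: r) {r₀ : List A} (hr₀ : IsReturnWord u z r₀)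
    (hmin : ∀ r, IsReturnWord u z r → r₀ ≤ r) : LexMin u r₀ := by
  rintro g ⟨j, hgj⟩ hlen
  by_contra! hlt
  have hzg : z <+: g := by
    have hle := List.take_le_take_of_le hlt.le z.length
    rw [← List.prefix_iff_eq_take.mp (hzr _ hr₀)] at hle
    rw [← hz.eq_of_le (hgj.of_prefix (g.take_prefix _))
      (by simp [hlen, (hzr _ hr₀).length_le]) hle]
    exact g.take_prefix _
  obtain ⟨r, hr, hrj⟩ := exists_isReturnWord_occursAt hur (hgj.of_prefix hzg)
  refine (hmin r hr).not_gt ?_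
  rcases le_total r.length g.length with h | h
  · exact lt_of_le_of_lt (hrj.prefix_of_length_le hgj h).lex_le hlt
  · obtain ⟨t, rfl⟩ := hgj.prefix_of_length_le hrj h
    simpa using List.append_lt_append_of_length_eq hlen hlt t []

end ReturnWords

end PeriodicityComplexity

theorem alpha_lexMin_return_lyndon_unbordered_general
    {A : Type*} [LinearOrder A] (a : A) (ha : ∀ b : A, a ≤ b)
    (u : ℕ → A) (hur : UniformlyRecurrent u)
    (α : ℕ → List A) (e : ℕ → ℕ)
    (hα1 : α 1 = [a])
    (he : ∀ k, 1 ≤ k → IsFactor u (wpow (α k) (e k)) ∧ ¬ IsFactor u (wpow (α k) (e k + 1)))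
    (hret : ∀ k, 1 ≤ k → IsReturnWord u (wpow (α k) (e k)) (α (k + 1)))
    (hmin : ∀ k, 1 ≤ k → ∀ r : List A, IsReturnWord u (wpow (α k) (e k)) r → α (k + 1) ≤ r) :
    ∀ k, 1 ≤ k →
      (∀ z : List A, IsFactor u z → z.length = (α k).length → α k ≤ z) ∧
      (∀ r : List A, IsReturnWord u (wpow (α k) (e k)) r → IsLyndon r) ∧
      Unbordered (α k) := by
  have hprefix : ∀ k, 1 ≤ k → Unbordered (α k) →
      ∀ r, IsReturnWord u (wpow (α k) (e k)) r → wpow (α k) (e k) <+: r :=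
    fun k hk hunb _ hr => hr.wpow_prefix hunb (he k hk).2
  have key : ∀ k, 1 ≤ k → Unbordered (α k) ∧ LexMin u (α k) := by
    intro k hk
    induction k, hk using Nat.le_induction with
    | base =>
      rw [hα1]
      exact ⟨fun b hb hlen _ _ => hb (List.length_eq_zero_iff.mp (by simpa using hlen)),
        lexMin_singleton ha⟩
    | succ k hk ih =>
      have hpre := hprefix k hk ih.1
      exact ⟨(hret k hk).unbordered (fun _ hP => ih.2.of_prefix_wpow hP) (hpre _ (hret k hk)),
        (hret k hk).lexMin_of_forall_le hur (ih.2.of_prefix_wpow List.prefix_rfl) hpre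
          (hmin k hk)⟩
  intro k hk
  obtain ⟨hunb, hlex⟩ := key k hk
  exact ⟨hlex, fun r hr => hr.isLyndon (fun _ hP => hlex.of_prefix_wpow hP)
    (hprefix k hk hunb r hr), hunb⟩

/-- Let `u` be an infinite non-periodic uniformly recurrent word over a
linearly ordered alphabet whose least letter `a` occurs in `u`. Let `α 1 = a`, let `e k` be
the largest integer with `(α k)^(e k)` a factor of `u`, and let `α (k+1)` be the
lexicographically minimal return word to `(α k)^(e k)` in `u`. Then for each `k ≥ 1`,
`α k` is the lexicographically minimal factor of `u` of length `|α k|`, every return word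
to `(α k)^(e k)` is Lyndon, and `α k` is unbordered. -/
theorem alpha_lexMin_return_lyndon_unbordered
    {A : Type*} [LinearOrder A] (a : A) (ha : ∀ b : A, a ≤ b)
    (u : ℕ → A) (hur : UniformlyRecurrent u) (hnp : ¬ Periodic u)
    (hain : IsFactor u [a])
    (α : ℕ → List A) (e : ℕ → ℕ)
    (hα1 : α 1 = [a])
    (he : ∀ k, 1 ≤ k → IsFactor u (wpow (α k) (e k)) ∧ ¬ IsFactor u (wpow (α k) (e k + 1)))
    (hret : ∀ k, 1 ≤ k → IsReturnWord u (wpow (α k) (e k)) (α (k + 1)))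
    (hmin : ∀ k, 1 ≤ k → ∀ r : List A, IsReturnWord u (wpow (α k) (e k)) r → α (k + 1) ≤ r) :
    ∀ k, 1 ≤ k →
      (∀ z : List A, IsFactor u z → z.length = (α k).length → α k ≤ z) ∧
      (∀ r : List A, IsReturnWord u (wpow (α k) (e k)) r → IsLyndon r) ∧
      Unbordered (α k) :=
  alpha_lexMin_return_lyndon_unbordered_general a ha u hur α e hα1 he hret hmin
end

section
/- Let (n_i)_{i≥1} be a sequence of positive integers with n_1 ≥ 2, and over the alphabet {a,b} define u_0 = ε (the empty word) and u_i = u_{i-1} a (u_{i-1} b)^{n_i} u_{i-1} for i ≥ 1; let U = lim_{i→∞} u_i be the infinite word having every u_i as a prefix. Then U is uniformly recurrent; more precisely, every factor z of U whose first occurrence lies within the prefix u_i has maximal return time at most |u_i| + 1. -/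
open scoped BigOperators ENNReal

namespace PeriodicityComplexity

variable {A : Type*}

/-- The words `u_0 = ε`, `u_i = u_{i-1} a (u_{i-1} b)^{n_i} u_{i-1}` of the generalized
Toeplitz construction. -/
def uSeq (a b : A) (nseq : ℕ → ℕ) : ℕ → List A
  | 0 => []
  | i + 1 =>
      uSeq a b nseq i ++ [a] ++ wpow (uSeq a b nseq i ++ [b]) (nseq (i + 1)) ++ uSeq a b nseq i

end PeriodicityComplexity

/-!
For `i ≤ j`, the word `u_j` is a concatenation of blocks `u_i c` (with letters `c ∈ {a, b}`)
followed by `u_i`, and the number of blocks grows with `j`. Hence `u_i` occurs in `U` at every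
multiple of `|u_i| + 1`, so a factor `z` of `u_i = p z q` occurs at every position
`m (|u_i| + 1) + |p|`: each window of length `|u_i| + 1` contains an occurrence of `z`.
-/

namespace PeriodicityComplexity

variable {A : Type*}

def OccursInEveryWindow (w : ℕ → A) (z : List A) (N : ℕ) : Prop :=
  ∀ j, ∃ t, j ≤ t ∧ t < j + N ∧ OccursAt w z t

section Occurrences

variable {w : ℕ → A} {x y z v : List A} {j : ℕ}

theorem occursAt_iff_getElem :
    OccursAt w z j ↔ ∀ t (ht : t < z.length), z[t] = w (j + t) := by
  constructor
  · intro h t ht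
    conv_lhs => rw [List.getElem_of_eq h ht]
    simp
  · intro h
    exact List.ext_getElem (by simp) fun t h₁ _ => by simpa using h t h₁

theorem OccursAt.append_left (h : OccursAt w (x ++ y) j) : OccursAt w x j := by
  rw [occursAt_iff_getElem] at h ⊢
  intro t ht
  rw [← List.getElem_append_left ht]
  exact h t (by simp; omega)

theorem OccursAt.append_right (h : OccursAt w (x ++ y) j) : OccursAt w y (j + x.length) := by
  rw [occursAt_iff_getElem] at h ⊢
  intro t ht
  have := h (x.length + t) (by simp; omega)
  rw [List.getElem_append_right (by omega)] at this
  simpa [Nat.add_assoc, Nat.add_comm t] using this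

theorem OccursAt.isInfix (hz : OccursAt w z j) (hv : OccursAt w v 0)
    (hle : j + z.length ≤ v.length) : z <:+: v := by
  have hz_eq : z = (v.drop j).take z.length := by
    rw [occursAt_iff_getElem] at hv hz
    refine List.ext_getElem (by simp; omega) fun t h₁ _ => ?_
    rw [List.getElem_take, List.getElem_drop, hz t h₁, hv (j + t) (by omega), Nat.zero_add]
  rw [hz_eq]
  exact ((v.drop j).take_prefix z.length).isInfix.trans (v.drop_suffix j).isInfix

theorem OccursAt.of_blocks (cs : List A) {m : ℕ} (hm : m ≤ cs.length)
    (h : OccursAt w ((cs.map (fun c => v ++ [c])).flatten ++ v) j) :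
    OccursAt w v (j + m * (v.length + 1)) := by
  induction cs generalizing m j with
  | nil => simpa [Nat.le_zero.mp hm] using h
  | cons c cs ih =>
    rw [List.map_cons, List.flatten_cons, List.append_assoc] at h
    cases m with
    | zero => simpa using h.append_left.append_left
    | succ m =>
      have := ih (Nat.le_of_succ_le_succ hm) h.append_right
      simp only [List.length_append, List.length_singleton] at this
      rwa [Nat.succ_mul, Nat.add_comm (m * _), ← Nat.add_assoc]

end Occurrences

theorem exists_mul_add_mem_Ico {p s : ℕ} (hs : s < p) (j : ℕ) :
    ∃ m, j ≤ m * p + s ∧ m * p + s < j + p := by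
  induction j with
  | zero => exact ⟨0, by omega, by omega⟩
  | succ j ih =>
    obtain ⟨m, h₁, h₂⟩ := ih
    rcases Nat.lt_or_ge j (m * p + s) with h | h
    · exact ⟨m, h, by omega⟩
    · exact ⟨m + 1, by rw [Nat.succ_mul]; omega, by rw [Nat.succ_mul]; omega⟩

theorem occursInEveryWindow_of_forall_occursAt {w : ℕ → A} {z : List A} {p s : ℕ}
    (hs : s < p) (h : ∀ m, OccursAt w z (m * p + s)) : OccursInEveryWindow w z p := by
  intro j
  obtain ⟨m, h₁, h₂⟩ := exists_mul_add_mem_Ico hs j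
  exact ⟨_, h₁, h₂, h m⟩

theorem OccursInEveryWindow.returnLength_le {w : ℕ → A} {z : List A} {N l : ℕ}
    (hN : OccursInEveryWindow w z N) (hl : IsReturnLength w z l) : l ≤ N := by
  obtain ⟨r, ⟨-, j, -, -, hgap, -⟩, rfl⟩ := hl
  by_contra! hlt
  obtain ⟨t, h₁, h₂, ht⟩ := hN (j + 1)
  exact hgap t (by omega) (by omega) ht

theorem wpow_succ (v : List A) (n : ℕ) : wpow v (n + 1) = v ++ wpow v n := by
  simp [wpow, List.replicate_succ]

theorem wpow_flatten_map (f : A → List A) (cs : List A) (n : ℕ) :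
    wpow (cs.map f).flatten n = ((wpow cs n).map f).flatten := by
  induction n with
  | zero => simp [wpow]
  | succ n ih => simp [wpow_succ, ih]

section Toeplitz

variable (a b : A) (nseq : ℕ → ℕ)

theorem le_length_uSeq (i : ℕ) : i ≤ (uSeq a b nseq i).length := by
  induction i with
  | zero => simp
  | succ i ih => simp only [uSeq, List.length_append, List.length_singleton]; omega

theorem uSeq_add_eq_blocks (i k : ℕ) : ∃ cs : List A, k ≤ cs.length ∧
    uSeq a b nseq (i + k) =
      (cs.map (fun c => uSeq a b nseq i ++ [c])).flatten ++ uSeq a b nseq i := by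
  induction k with
  | zero => exact ⟨[], le_rfl, by simp⟩
  | succ k ih =>
    obtain ⟨cs, hk, hcs⟩ := ih
    refine ⟨cs ++ [a] ++ wpow (cs ++ [b]) (nseq (i + k + 1)) ++ cs, by simp; omega, ?_⟩
    have hblock : uSeq a b nseq (i + k) ++ [b] =
        ((cs ++ [b]).map (fun c => uSeq a b nseq i ++ [c])).flatten := by
      simp [hcs]
    rw [← Nat.add_assoc, uSeq, hblock, wpow_flatten_map, hcs]
    simp

variable {a b nseq} {U : ℕ → A}

theorem occursAt_uSeq_mul (hU : ∀ i, OccursAt U (uSeq a b nseq i) 0) (i m : ℕ) :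
    OccursAt U (uSeq a b nseq i) (m * ((uSeq a b nseq i).length + 1)) := by
  obtain ⟨cs, hm, hcs⟩ := uSeq_add_eq_blocks a b nseq i m
  have h := hU (i + m)
  rw [hcs] at h
  simpa only [Nat.zero_add] using h.of_blocks cs hm

theorem occursInEveryWindow_of_isInfix_uSeq (hU : ∀ i, OccursAt U (uSeq a b nseq i) 0)
    {i : ℕ} {z : List A} (hz : z <:+: uSeq a b nseq i) :
    OccursInEveryWindow U z ((uSeq a b nseq i).length + 1) := by
  obtain ⟨p, q, hpq⟩ := hz
  refine occursInEveryWindow_of_forall_occursAt (s := p.length) ?_ fun m => ?_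
  · have := congrArg List.length hpq
    simp only [List.length_append] at this
    omega
  · have h := occursAt_uSeq_mul hU i m
    rw [← hpq] at h ⊢
    exact h.append_left.append_right

end Toeplitz

end PeriodicityComplexity

open PeriodicityComplexity

theorem toeplitz_uniformly_recurrent_general
    {A : Type*} (a b : A)
    (nseq : ℕ → ℕ)
    (U : ℕ → A) (hU : ∀ i : ℕ, OccursAt U (uSeq a b nseq i) 0) :
    UniformlyRecurrent U ∧
    ∀ (i : ℕ) (z : List A), z <:+: uSeq a b nseq i →
      ∀ l : ℕ, IsReturnLength U z l → l ≤ (uSeq a b nseq i).length + 1 := by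
  refine ⟨fun z ⟨j, hz⟩ => ?_, fun i z hz l hl =>
    (occursInEveryWindow_of_isInfix_uSeq hU hz).returnLength_le hl⟩
  have hinfix : z <:+: uSeq a b nseq (j + z.length) :=
    hz.isInfix (hU _) (le_length_uSeq a b nseq _)
  exact ⟨_, occursInEveryWindow_of_isInfix_uSeq hU hinfix⟩

/-- Let `(n_i)` be positive integers with `n_1 ≥ 2` and let `U` be the
infinite word having every `u_i` (where `u_0 = ε`, `u_i = u_{i-1} a (u_{i-1} b)^{n_i} u_{i-1}`)
as a prefix. Then `U` is uniformly recurrent; more precisely, every factor `z` of the prefix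
`u_i` has maximal return time at most `|u_i| + 1`. -/
theorem toeplitz_uniformly_recurrent
    {A : Type*} (a b : A) (hab : a ≠ b)
    (nseq : ℕ → ℕ) (hpos : ∀ i, 1 ≤ i → 1 ≤ nseq i) (hn1 : 2 ≤ nseq 1)
    (U : ℕ → A) (hU : ∀ i : ℕ, OccursAt U (uSeq a b nseq i) 0) :
    UniformlyRecurrent U ∧
    ∀ (i : ℕ) (z : List A), z <:+: uSeq a b nseq i →
      ∀ l : ℕ, IsReturnLength U z l → l ≤ (uSeq a b nseq i).length + 1 :=
  toeplitz_uniformly_recurrent_general a b nseq U hU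
end
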